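/- For every integer r ≥ 1 and every integer k ≥ 1, the φ-mixing coefficients of the finite process (X_i^(r))_{1≤i≤λ(r)} satisfy φ(k) ≤ 2·((b−1)/b)^{k/2 − 1}. -/

import Mathlib

/-!
Cut the blocks of `r` into the `λ(r) - k - p + 1` least significant non-zero blocks (digits below
`T`), the next `k - 1` ones (digits `T, …, M - 1`, so `M - T ≥ k - 1`) and the top `p` ones.
For `i ≤ p`, `b^M` divides `r[i-1]` and `r[i]`, so `X_1, …, X_p` only see the digits of index
`≥ M`. For `i ≥ k + p`, `r[i-1]` and `r[i]` share their digits from `T` on, so `X_i` only sees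
the digits below `M`, unless their value lies in a window of fewer than `b^T` values: only there
can adding `r[i-1]` and adding `r[i]` differ in whether they carry past the digit `M`.
Translation invariance of the Haar measure makes events on the digits `≥ M` independent of
events on the digits `< M`, whence `|ℙ(B|A) - ℙ(B)| ≤ 2 ℙ(window) ≤ 2 b^(T-M) ≤ 2 b^(1-k)`.
-/

open Filter Topology MeasureTheory

noncomputable section

/-- Sum of the base-`b` digits of `n`. -/
def digitSum (b n : ℕ) : ℕ := (Nat.digits b n).sum

/-- `Δ^(r)(n) = s(n+r) - s(n)`, the variation of the base-`b` digit sum when adding `r`. -/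
def delta (b r n : ℕ) : ℤ := (digitSum b (n + r) : ℤ) - (digitSum b n : ℤ)

/-- The value `x_0 + x_1 b + ⋯ + x_k b^k` given by the first `k+1` digits of a `b`-adic
integer `x : ℕ → Fin b`. -/
def valk (b : ℕ) (x : ℕ → Fin b) (k : ℕ) : ℕ :=
  ∑ i ∈ Finset.range (k + 1), (x i : ℕ) * b ^ i

/-- `Δ_k^(r)(x) = s_k(x+r) - s_k(x)`: since carries propagate upwards, the first `k+1`
digits of `x + r` are the base-`b` digits of `(x_0 + x_1 b + ⋯ + x_k b^k + r) % b^(k+1)`. -/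
def deltak (b r k : ℕ) (x : ℕ → Fin b) : ℤ :=
  (digitSum b ((valk b x k + r) % b ^ (k + 1)) : ℤ) - (digitSum b (valk b x k) : ℤ)

/-- `Δ^(r)(x) = lim_k Δ_k^(r)(x)`; the sequence is eventually constant for `ℙ`-a.e. `x`. -/
def deltaX (b r : ℕ) (x : ℕ → Fin b) : ℤ :=
  limUnder atTop fun k => deltak b r k x

/-- Decomposition of a digit list (least significant digit first) into blocks: adjacent equal
digits that are `0` or `b-1` are grouped together; any other digit forms its own block. -/
def blocksOf (b : ℕ) : List ℕ → List (List ℕ)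
  | [] => []
  | d :: l =>
    match blocksOf b l with
    | [] => [[d]]
    | bl :: rest =>
        if bl.head? = some d ∧ (d = 0 ∨ d = b - 1) then (d :: bl) :: rest
        else [d] :: bl :: rest

/-- `λ(r)`: the number of non-zero blocks of the base-`b` expansion of `r`. -/
def lambB (b r : ℕ) : ℕ :=
  ((blocksOf b (Nat.digits b r)).filter fun bl => bl.head? ≠ some 0).length

/-- Replace the `m` least significant non-zero blocks by blocks of `0`'s. -/
def zeroOutBlocks : ℕ → List (List ℕ) → List (List ℕ)
  | _, [] => []
  | 0, bs => bs
  | m + 1, bl :: bs =>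
      if bl.head? = some 0 then bl :: zeroOutBlocks (m + 1) bs
      else (bl.map fun _ => 0) :: zeroOutBlocks m bs

/-- `r[i]`: the integer obtained from the base-`b` expansion of `r` by replacing each
non-zero block `B_k` with `k > i` (blocks being numbered from the most significant digits,
i.e. the `λ(r) - i` least significant non-zero blocks) by a block of `0`'s of the same
length.  In particular `r[0] = 0` and `r[λ(r)] = r`. -/
def rPart (b r i : ℕ) : ℕ :=
  Nat.ofDigits b (List.flatten (zeroOutBlocks (lambB b r - i) (blocksOf b (Nat.digits b r))))

/-- Addition of a natural number `m` to a `b`-adic integer `x` (digitwise, with carries):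
the `k`-th digit of `x + m` only depends on `x_0, …, x_k` and `m`. -/
def addNat (b : ℕ) (hb : 0 < b) (x : ℕ → Fin b) (m : ℕ) : ℕ → Fin b :=
  fun k => ⟨(valk b x k + m) / b ^ k % b, Nat.mod_lt _ hb⟩

/-- The process `X_i^(r) := Δ^(r[i]-r[i-1]) ∘ T^(r[i-1])` on the `b`-adic integers. -/
def Xproc (b : ℕ) (hb : 0 < b) (r i : ℕ) (x : ℕ → Fin b) : ℤ :=
  deltaX b (rPart b r i - rPart b r (i - 1)) (addNat b hb x (rPart b r (i - 1)))

/-! ### Digit sums of translates of `b`-adic integers -/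

def truncVal (b M : ℕ) (x : ℕ → Fin b) : ℕ := ∑ i ∈ Finset.range M, (x i : ℕ) * b ^ i

def shiftDigits {b : ℕ} (M : ℕ) (x : ℕ → Fin b) : ℕ → Fin b := fun j => x (M + j)

section Digits

variable {b : ℕ}

theorem digitSum_add_base_pow_mul (hb : 1 < b) {m a : ℕ} (ha : a < b ^ m) (q : ℕ) :
    digitSum b (a + b ^ m * q) = digitSum b a + digitSum b q := by
  rcases Nat.eq_zero_or_pos q with rfl | hq
  · simp [digitSum]
  · have hlen := (Nat.digits_length_le_iff hb a).2 ha
    have hdigits := Nat.digits_append_zeroes_append_digits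
      (k := m - (b.digits a).length) (n := a) hb hq
    rw [Nat.add_sub_cancel' hlen] at hdigits
    simp [digitSum, ← hdigits]

theorem digitSum_add_base_pow_mul_mod (hb : 1 < b) {M k c : ℕ} (hc : c < b ^ M) (hMk : M ≤ k)
    (W : ℕ) : digitSum b ((c + b ^ M * W) % b ^ (k + 1))
      = digitSum b c + digitSum b (W % b ^ (k - M + 1)) := by
  have hpow : b ^ (k + 1) = b ^ M * b ^ (k - M + 1) := by rw [← pow_add]; congr 1; omega
  have hlow : (c + b ^ M * W) % b ^ M = c := by rw [Nat.add_mul_mod_self_left, Nat.mod_eq_of_lt hc]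
  have hhigh : (c + b ^ M * W) / b ^ M = W := by
    rw [Nat.add_mul_div_left _ _ (by positivity), Nat.div_eq_of_lt hc, zero_add]
  rw [hpow, Nat.mod_mul, hlow, hhigh, digitSum_add_base_pow_mul hb hc]

theorem truncVal_lt (M : ℕ) (x : ℕ → Fin b) : truncVal b M x < b ^ M := by
  induction M with
  | zero => simp [truncVal]
  | succ M ih =>
    calc truncVal b (M + 1) x = truncVal b M x + (x M : ℕ) * b ^ M := Finset.sum_range_succ _ _
      _ < b ^ M + (x M : ℕ) * b ^ M := by omega
      _ = ((x M : ℕ) + 1) * b ^ M := by ring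
      _ ≤ b ^ (M + 1) := by rw [pow_succ']; exact Nat.mul_le_mul_right _ (x M).isLt

theorem dependsOn_truncVal (M : ℕ) : DependsOn (truncVal b M) (Set.Iio M) :=
  fun _ _ hxy => Finset.sum_congr rfl fun j hj => by rw [hxy j (Finset.mem_range.1 hj)]

theorem valk_eq_truncVal_add {M k : ℕ} (hMk : M ≤ k) (x : ℕ → Fin b) :
    valk b x k = truncVal b M x + b ^ M * valk b (shiftDigits M x) (k - M) := by
  rw [valk, show k + 1 = M + (k - M + 1) by omega, Finset.sum_range_add, valk, Finset.mul_sum]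
  congr 1
  refine Finset.sum_congr rfl fun i _ => ?_
  rw [shiftDigits, pow_add]
  ring

theorem valk_addNat (hb : 0 < b) (x : ℕ → Fin b) (a k : ℕ) :
    valk b (addNat b hb x a) k = (valk b x k + a) % b ^ (k + 1) := by
  induction k with
  | zero => simp [valk, addNat]
  | succ k ih =>
    have hsucc : ∀ y : ℕ → Fin b, valk b y (k + 1) = valk b y k + (y (k + 1) : ℕ) * b ^ (k + 1) :=
      fun y => Finset.sum_range_succ _ _
    have hmod : (valk b x k + a) % b ^ (k + 1) = (valk b x (k + 1) + a) % b ^ (k + 1) := by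
      rw [hsucc, add_right_comm, Nat.add_mul_mod_self_right]
    rw [hsucc, ih, hmod, pow_succ b (k + 1), Nat.mod_mul, addNat]
    ring

theorem deltak_addNat (hb : 0 < b) (x : ℕ → Fin b) (a t k : ℕ) :
    deltak b t k (addNat b hb x a) = (digitSum b ((valk b x k + a + t) % b ^ (k + 1)) : ℤ)
      - digitSum b ((valk b x k + a) % b ^ (k + 1)) := by
  rw [deltak, valk_addNat, Nat.mod_add_mod]

end Digits

theorem limUnder_atTop_comp_sub {α : Type*} [TopologicalSpace α] [Nonempty α] (g : ℕ → α)
    (M : ℕ) : limUnder atTop (fun k => g (k - M)) = limUnder atTop g := by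
  change lim (map (g ∘ fun k => k - M) atTop) = lim (map g atTop)
  rw [← Filter.map_map, Filter.map_sub_atTop_eq_nat]

section Delta

variable {b : ℕ}

theorem deltak_addNat_base_pow_mul (hb : 1 < b) {M k : ℕ} (hMk : M ≤ k) (x : ℕ → Fin b)
    (a t : ℕ) : deltak b (b ^ M * t) k (addNat b (Nat.zero_lt_of_lt hb) x (b ^ M * a))
      = deltak b t (k - M) (addNat b (Nat.zero_lt_of_lt hb) (shiftDigits M x) a) := by
  rw [deltak_addNat, deltak_addNat, valk_eq_truncVal_add hMk]
  set V := valk b (shiftDigits M x) (k - M)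
  rw [show truncVal b M x + b ^ M * V + b ^ M * a + b ^ M * t
      = truncVal b M x + b ^ M * (V + a + t) by ring,
    show truncVal b M x + b ^ M * V + b ^ M * a = truncVal b M x + b ^ M * (V + a) by ring,
    digitSum_add_base_pow_mul_mod hb (truncVal_lt M x) hMk,
    digitSum_add_base_pow_mul_mod hb (truncVal_lt M x) hMk]
  push_cast
  ring

theorem deltaX_addNat_base_pow_mul (hb : 1 < b) (M : ℕ) (x : ℕ → Fin b) (a t : ℕ) :
    deltaX b (b ^ M * t) (addNat b (Nat.zero_lt_of_lt hb) x (b ^ M * a))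
      = deltaX b t (addNat b (Nat.zero_lt_of_lt hb) (shiftDigits M x) a) := by
  have h : (fun k => deltak b (b ^ M * t) k (addNat b (Nat.zero_lt_of_lt hb) x (b ^ M * a)))
      =ᶠ[atTop] fun k => deltak b t (k - M) (addNat b (Nat.zero_lt_of_lt hb) (shiftDigits M x) a) :=
    (eventually_ge_atTop M).mono fun k hk => deltak_addNat_base_pow_mul hb hk x a t
  rw [deltaX, deltaX, ← limUnder_atTop_comp_sub
    (fun k => deltak b t k (addNat b (Nat.zero_lt_of_lt hb) (shiftDigits M x) a)) M]
  exact congrArg lim (Filter.map_congr h)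

theorem deltaX_addNat_of_no_carry (hb : 1 < b) {M : ℕ} (x : ℕ → Fin b) (aL aH t : ℕ)
    (hcarry : (truncVal b M x + aL + t) / b ^ M = (truncVal b M x + aL) / b ^ M) :
    deltaX b t (addNat b (Nat.zero_lt_of_lt hb) x (aL + b ^ M * aH))
      = (digitSum b ((truncVal b M x + aL + t) % b ^ M) : ℤ)
        - digitSum b ((truncVal b M x + aL) % b ^ M) := by
  refine Tendsto.limUnder_eq (tendsto_const_nhds.congr' ?_)
  filter_upwards [eventually_ge_atTop M] with k hMk
  have hpos : 0 < b ^ M := by positivity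
  set u := truncVal b M x
  set V := valk b (shiftDigits M x) (k - M)
  have hsplit : ∀ n, u + b ^ M * V + (aL + b ^ M * aH) + n
      = (u + aL + n) % b ^ M + b ^ M * ((u + aL + n) / b ^ M + V + aH) := by
    intro n
    have := Nat.div_add_mod (u + aL + n) (b ^ M)
    rw [Nat.mul_add, Nat.mul_add]
    omega
  have hsplit₀ := hsplit 0
  simp only [add_zero] at hsplit₀
  rw [deltak_addNat, valk_eq_truncVal_add hMk, hsplit t, hsplit₀, hcarry,
    digitSum_add_base_pow_mul_mod hb (Nat.mod_lt _ hpos) hMk,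
    digitSum_add_base_pow_mul_mod hb (Nat.mod_lt _ hpos) hMk]
  push_cast
  ring

end Delta

section Carry

variable {b : ℕ}

/-- The values `u < b ^ M` such that `u + W + b ^ T * R ≥ b ^ M` holds for some but not all
`W < b ^ T`. -/
def carryWindow (b M T R : ℕ) : Finset ℕ :=
  Finset.Ico (b ^ M - b ^ T * (R + 1) + 1) (b ^ M - b ^ T * R)

theorem card_carryWindow_le (M T R : ℕ) : (carryWindow b M T R).card ≤ b ^ T := by
  rw [carryWindow, Nat.card_Ico, mul_add_one]
  omega

theorem add_div_eq_of_notMem_carryWindow {M T R u W W' : ℕ} (hW : W ≤ W') (hW' : W' < b ^ T)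
    (hR : b ^ T * (R + 1) ≤ b ^ M) (hu : u < b ^ M) (hnot : u ∉ carryWindow b M T R) :
    (u + (W + b ^ T * R) + (W' - W)) / b ^ M = (u + (W + b ^ T * R)) / b ^ M := by
  rw [carryWindow, Finset.mem_Ico, mul_add_one] at *
  rcases lt_or_ge (u + W + b ^ T * R) (b ^ M) with h | h
  · rw [Nat.div_eq_of_lt (by omega), Nat.div_eq_of_lt (by omega)]
  · rw [Nat.div_eq_of_lt_le (k := 1) (by omega) (by omega),
      Nat.div_eq_of_lt_le (k := 1) (by omega) (by omega)]

theorem dependsOn_deltaX_addNat (hb : 1 < b) {M a t : ℕ} (ha : b ^ M ∣ a) (ht : b ^ M ∣ t) :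
    DependsOn (fun x => deltaX b t (addNat b (Nat.zero_lt_of_lt hb) x a)) (Set.Ici M) := by
  obtain ⟨a, rfl⟩ := ha
  obtain ⟨t, rfl⟩ := ht
  intro x y hxy
  simp only [deltaX_addNat_base_pow_mul hb]
  congr 2
  funext j
  exact hxy (M + j) (Set.mem_Ici.2 (Nat.le_add_right M j))

theorem deltaX_addNat_congr_of_no_carry (hb : 1 < b) {M T R W W' c : ℕ} (hW : W ≤ W')
    (hW' : W' < b ^ T) (hR : b ^ T * (R + 1) ≤ b ^ M) {x y : ℕ → Fin b}
    (hx : truncVal b M x ∉ carryWindow b M T R) (hxy : ∀ j < M, x j = y j) :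
    deltaX b (W' - W) (addNat b (Nat.zero_lt_of_lt hb) x (W + b ^ T * R + b ^ M * c))
      = deltaX b (W' - W) (addNat b (Nat.zero_lt_of_lt hb) y (W + b ^ T * R + b ^ M * c)) := by
  have htrunc : truncVal b M x = truncVal b M y := dependsOn_truncVal M hxy
  have hcarry := add_div_eq_of_notMem_carryWindow hW hW' hR (truncVal_lt M x) hx
  rw [deltaX_addNat_of_no_carry hb x _ _ _ hcarry, deltaX_addNat_of_no_carry hb y _ _ _
    (htrunc ▸ hcarry), htrunc]

end Carry

/-! ### Blocks of `r` -/

def nonzeroBlockCount (bs : List (List ℕ)) : ℕ := (bs.filter fun bl => bl.head? ≠ some 0).length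

theorem nonzeroBlockCount_cons (bl : List ℕ) (bs : List (List ℕ)) :
    nonzeroBlockCount (bl :: bs) = (if bl.head? = some 0 then 0 else 1) + nonzeroBlockCount bs := by
  by_cases h : bl.head? = some 0 <;> simp [nonzeroBlockCount, h, add_comm]

theorem nonzeroBlockCount_append (bs bs' : List (List ℕ)) :
    nonzeroBlockCount (bs ++ bs') = nonzeroBlockCount bs + nonzeroBlockCount bs' := by
  simp [nonzeroBlockCount, List.filter_append]

theorem exists_append_nonzeroBlockCount_eq {n : ℕ} {bs : List (List ℕ)}
    (hn : n ≤ nonzeroBlockCount bs) :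
    ∃ bs₁ bs₂, bs = bs₁ ++ bs₂ ∧ nonzeroBlockCount bs₁ = n := by
  induction bs generalizing n with
  | nil => exact ⟨[], [], rfl, by simp [nonzeroBlockCount] at hn ⊢; omega⟩
  | cons bl bs ih =>
    rw [nonzeroBlockCount_cons] at hn
    by_cases h : bl.head? = some 0
    · obtain ⟨bs₁, bs₂, rfl, h₁⟩ := ih (n := n) (by simp [h] at hn; omega)
      exact ⟨bl :: bs₁, bs₂, rfl, by simp [nonzeroBlockCount_cons, h, h₁]⟩
    · rcases n with _ | n
      · exact ⟨[], bl :: bs, rfl, rfl⟩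
      · obtain ⟨bs₁, bs₂, rfl, h₁⟩ := ih (n := n) (by simp [h] at hn; omega)
        exact ⟨bl :: bs₁, bs₂, rfl, by simp [nonzeroBlockCount_cons, h, h₁]; omega⟩

theorem blocksOf_flatten (b : ℕ) (l : List ℕ) : (blocksOf b l).flatten = l := by
  induction l with
  | nil => rfl
  | cons d l ih =>
    rw [blocksOf]
    rcases h : blocksOf b l with _ | ⟨bl, rest⟩
    · simp_all
    · rw [h] at ih
      dsimp only
      split_ifs <;> simp [← ih]

theorem exists_eq_replicate_of_mem_blocksOf {b : ℕ} {l bl : List ℕ} (h : bl ∈ blocksOf b l) :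
    ∃ n d, bl = List.replicate (n + 1) d := by
  induction l generalizing bl with
  | nil => simp [blocksOf] at h
  | cons d l ih =>
    rw [blocksOf] at h
    rcases hl : blocksOf b l with _ | ⟨bl₀, rest⟩ <;> rw [hl] at h
    · exact ⟨0, d, by simpa using h⟩
    · dsimp only at h
      split_ifs at h with hd
      · rcases List.mem_cons.1 h with rfl | h
        · obtain ⟨n, d', rfl⟩ := ih (hl ▸ List.mem_cons_self)
          obtain rfl : d' = d := by simpa [List.replicate_succ] using hd.1
          exact ⟨n + 1, _, rfl⟩
        · exact ih (hl ▸ List.mem_cons_of_mem _ h)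
      · rcases List.mem_cons.1 h with rfl | h
        · exact ⟨0, d, rfl⟩
        · exact ih (hl ▸ h)

theorem nonzeroBlockCount_le_length_flatten {bs : List (List ℕ)} (h : ∀ bl ∈ bs, bl ≠ []) :
    nonzeroBlockCount bs ≤ bs.flatten.length := by
  induction bs with
  | nil => simp [nonzeroBlockCount]
  | cons bl bs ih =>
    have hbl : 1 ≤ bl.length := List.length_pos_iff.2 (h bl List.mem_cons_self)
    have := ih fun bl' h' => h bl' (List.mem_cons_of_mem _ h')
    rw [nonzeroBlockCount_cons, List.flatten_cons, List.length_append]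
    split_ifs <;> omega

theorem zeroOutBlocks_nil (m : ℕ) : zeroOutBlocks m [] = [] := by cases m <;> rfl

theorem zeroOutBlocks_zero (bs : List (List ℕ)) : zeroOutBlocks 0 bs = bs := by cases bs <;> rfl

theorem zeroOutBlocks_append_of_le {m : ℕ} {bs₁ : List (List ℕ)} (hm : m ≤ nonzeroBlockCount bs₁)
    (bs₂ : List (List ℕ)) : zeroOutBlocks m (bs₁ ++ bs₂) = zeroOutBlocks m bs₁ ++ bs₂ := by
  induction bs₁ generalizing m with
  | nil =>
    obtain rfl : m = 0 := by simpa [nonzeroBlockCount] using hm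
    simp [zeroOutBlocks_zero]
  | cons bl bs₁ ih =>
    rcases m with _ | m
    · simp [zeroOutBlocks_zero]
    · rw [nonzeroBlockCount_cons] at hm
      simp only [List.cons_append, zeroOutBlocks]
      split_ifs with h
      · simp [ih (m := m + 1) (by simp [h] at hm; omega)]
      · simp [ih (m := m) (by simp [h] at hm; omega)]

theorem zeroOutBlocks_append_of_ge {m : ℕ} {bs₁ : List (List ℕ)}
    (hrep : ∀ bl ∈ bs₁, ∃ n d, bl = List.replicate (n + 1) d) (hm : nonzeroBlockCount bs₁ ≤ m)
    (bs₂ : List (List ℕ)) : zeroOutBlocks m (bs₁ ++ bs₂)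
      = bs₁.map (List.map fun _ => 0) ++ zeroOutBlocks (m - nonzeroBlockCount bs₁) bs₂ := by
  induction bs₁ generalizing m with
  | nil => simp [nonzeroBlockCount]
  | cons bl bs₁ ih =>
    have hzero : bl.head? = some 0 → bl.map (fun _ => 0) = bl := by
      obtain ⟨n, d, rfl⟩ := hrep bl List.mem_cons_self
      intro h
      obtain rfl : d = 0 := by simpa [List.replicate_succ] using h
      simp
    have hrep' : ∀ bl ∈ bs₁, ∃ n d, bl = List.replicate (n + 1) d :=
      fun bl h => hrep bl (List.mem_cons_of_mem _ h)
    rw [nonzeroBlockCount_cons] at hm ⊢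
    rcases m with _ | m
    · have h : bl.head? = some 0 := by by_contra h; simp [h] at hm
      have := ih (m := 0) hrep' (by simp [h] at hm; omega)
      rw [zeroOutBlocks_zero] at this
      simp [zeroOutBlocks_zero, hzero h, this]
    · simp only [List.cons_append, zeroOutBlocks]
      split_ifs with h
      · simp [ih (m := m + 1) hrep' (by simp [h] at hm; omega), hzero h]
      · simp [ih (m := m) hrep' (by simp [h] at hm; omega), Nat.add_comm 1,
          Nat.add_sub_add_right]

theorem forall₂_zeroOutBlocks_le {m m' : ℕ} (h : m ≤ m') (bs : List (List ℕ)) :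
    List.Forall₂ (List.Forall₂ (· ≤ ·)) (zeroOutBlocks m' bs) (zeroOutBlocks m bs) := by
  have hrefl (l : List ℕ) : List.Forall₂ (· ≤ ·) l l := List.forall₂_same.2 fun _ _ => le_rfl
  induction bs generalizing m m' with
  | nil => simp [zeroOutBlocks_nil]
  | cons bl bs ih =>
    rcases m' with _ | m'
    · obtain rfl : m = 0 := by omega
      exact List.forall₂_same.2 fun l _ => hrefl l
    have hzero : List.Forall₂ (· ≤ ·) (bl.map fun _ => 0) bl :=
      List.forall₂_map_left_iff.2 (List.forall₂_same.2 fun _ _ => Nat.zero_le _)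
    rcases m with _ | m
    · simp only [zeroOutBlocks]
      split_ifs
      · exact .cons (hrefl _) (by simpa [zeroOutBlocks_zero] using ih (m := 0) h)
      · exact .cons hzero (by simpa [zeroOutBlocks_zero] using ih (m := 0) (Nat.zero_le m'))
    · simp only [zeroOutBlocks]
      split_ifs
      · exact .cons (hrefl _) (ih h)
      · exact .cons (hrefl _) (ih (by omega))

theorem Nat.ofDigits_le_ofDigits_of_forall₂ {b : ℕ} {l l' : List ℕ}
    (h : List.Forall₂ (· ≤ ·) l l') : Nat.ofDigits b l ≤ Nat.ofDigits b l' := by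
  induction h with
  | nil => rfl
  | cons ha _ ih =>
    simp only [Nat.ofDigits_cons]
    gcongr

theorem ofDigits_zeroOutBlocks_anti {b m m' : ℕ} (h : m ≤ m') (bs : List (List ℕ)) :
    Nat.ofDigits b (zeroOutBlocks m' bs).flatten ≤ Nat.ofDigits b (zeroOutBlocks m bs).flatten :=
  Nat.ofDigits_le_ofDigits_of_forall₂ (List.rel_flatten (forall₂_zeroOutBlocks_le h bs))

theorem length_flatten_zeroOutBlocks (m : ℕ) (bs : List (List ℕ)) :
    (zeroOutBlocks m bs).flatten.length = bs.flatten.length := by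
  simpa [zeroOutBlocks_zero] using
    (List.rel_flatten (forall₂_zeroOutBlocks_le (Nat.zero_le m) bs)).length_eq


theorem rPart_eq_of_blocksOf_eq_append {b r j : ℕ} {bs₁ bs₂ : List (List ℕ)}
    (hsplit : blocksOf b (Nat.digits b r) = bs₁ ++ bs₂)
    (hj : lambB b r - j ≤ nonzeroBlockCount bs₁) :
    rPart b r j = Nat.ofDigits b (zeroOutBlocks (lambB b r - j) bs₁).flatten
      + b ^ bs₁.flatten.length * Nat.ofDigits b bs₂.flatten := by
  rw [rPart, hsplit, zeroOutBlocks_append_of_le hj, List.flatten_append, Nat.ofDigits_append,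
    length_flatten_zeroOutBlocks]

theorem base_pow_dvd_rPart {b r j : ℕ} {bs₁ bs₂ : List (List ℕ)}
    (hsplit : blocksOf b (Nat.digits b r) = bs₁ ++ bs₂)
    (hj : nonzeroBlockCount bs₁ ≤ lambB b r - j) : b ^ bs₁.flatten.length ∣ rPart b r j := by
  have hrep (bl) (h : bl ∈ bs₁) : ∃ n d, bl = List.replicate (n + 1) d :=
    exists_eq_replicate_of_mem_blocksOf (hsplit ▸ List.mem_append_left _ h)
  rw [rPart, hsplit, zeroOutBlocks_append_of_ge hrep hj, List.flatten_append, Nat.ofDigits_append,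
    ← List.map_flatten, List.length_map, List.map_const', Nat.ofDigits_replicate_zero, zero_add]
  exact Dvd.intro _ rfl

/-- `R` is the value of the digits `T, …, M - 1` of `r` and `c` that of its digits from `M` on. -/
theorem exists_rPart_decomposition {b r k p : ℕ} (hb : 1 < b) (hk : 1 ≤ k)
    (hkp : k + p ≤ lambB b r) :
    ∃ T M R c : ℕ, T + (k - 1) ≤ M ∧ b ^ T * (R + 1) ≤ b ^ M ∧ (∀ j ≤ p, b ^ M ∣ rPart b r j) ∧
      ∀ i, k + p ≤ i → i ≤ lambB b r → ∃ W W', W ≤ W' ∧ W' < b ^ T ∧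
        rPart b r (i - 1) = W + b ^ T * R + b ^ M * c ∧
        rPart b r i = W' + b ^ T * R + b ^ M * c := by
  have hlam : lambB b r = nonzeroBlockCount (blocksOf b (Nat.digits b r)) := rfl
  obtain ⟨bsA, rest, hsplit, hA⟩ := exists_append_nonzeroBlockCount_eq
    (n := lambB b r - k - p + 1) (bs := blocksOf b (Nat.digits b r)) (by omega)
  have hrest : nonzeroBlockCount rest = k + p - 1 := by
    have := nonzeroBlockCount_append bsA rest
    rw [← hsplit] at this
    omega
  obtain ⟨bsR, bsT, rfl, hR⟩ :=
    exists_append_nonzeroBlockCount_eq (n := k - 1) (bs := rest) (by omega)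
  have hdig {d} (h : d ∈ bsA.flatten ∨ d ∈ bsR.flatten) : d < b := by
    refine Nat.digits_lt_base (m := r) hb ?_
    rw [← blocksOf_flatten b (Nat.digits b r), hsplit]
    simp only [List.flatten_append, List.mem_append]
    tauto
  refine ⟨bsA.flatten.length, bsA.flatten.length + bsR.flatten.length,
    Nat.ofDigits b bsR.flatten, Nat.ofDigits b bsT.flatten, ?_, ?_, fun j hj => ?_,
    fun i hi hi' => ?_⟩
  · have := nonzeroBlockCount_le_length_flatten (bs := bsR) fun bl h => by
      have hbl : bl ∈ blocksOf b (Nat.digits b r) := by simp [hsplit, h]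
      obtain ⟨n, d, rfl⟩ := exists_eq_replicate_of_mem_blocksOf hbl
      simp
    omega
  · rw [pow_add]
    exact Nat.mul_le_mul_left _ (Nat.ofDigits_lt_base_pow_length hb fun d hd => hdig (.inr hd))
  · simpa using base_pow_dvd_rPart (bs₁ := bsA ++ bsR) (by rw [hsplit, List.append_assoc])
      (by rw [nonzeroBlockCount_append]; omega)
  · have hdecomp (m) (hm : lambB b r - m ≤ nonzeroBlockCount bsA) : rPart b r m
        = Nat.ofDigits b (zeroOutBlocks (lambB b r - m) bsA).flatten
          + b ^ bsA.flatten.length * Nat.ofDigits b bsR.flatten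
          + b ^ (bsA.flatten.length + bsR.flatten.length) * Nat.ofDigits b bsT.flatten := by
      rw [rPart_eq_of_blocksOf_eq_append hsplit hm, List.flatten_append, Nat.ofDigits_append,
        pow_add]
      ring
    refine ⟨_, _, ofDigits_zeroOutBlocks_anti (by omega : lambB b r - i ≤ lambB b r - (i - 1)) bsA,
      ?_, hdecomp _ (by omega), hdecomp _ (by omega)⟩
    refine (ofDigits_zeroOutBlocks_anti (Nat.zero_le _) bsA).trans_lt ?_
    rw [zeroOutBlocks_zero]
    exact Nat.ofDigits_lt_base_pow_length hb fun d hd => hdig (.inl hd)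

theorem dependsOn_Xproc {b r i M : ℕ} (hb : 1 < b) (h₁ : b ^ M ∣ rPart b r (i - 1))
    (h₂ : b ^ M ∣ rPart b r i) : DependsOn (Xproc b (Nat.zero_lt_of_lt hb) r i) (Set.Ici M) :=
  dependsOn_deltaX_addNat hb h₁ (Nat.dvd_sub h₂ h₁)

theorem Xproc_congr_of_no_carry {b r i M T R W W' c : ℕ} (hb : 1 < b) (hW : W ≤ W')
    (hW' : W' < b ^ T) (hR : b ^ T * (R + 1) ≤ b ^ M)
    (h₁ : rPart b r (i - 1) = W + b ^ T * R + b ^ M * c)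
    (h₂ : rPart b r i = W' + b ^ T * R + b ^ M * c) {x y : ℕ → Fin b}
    (hx : truncVal b M x ∉ carryWindow b M T R) (hxy : ∀ j < M, x j = y j) :
    Xproc b (Nat.zero_lt_of_lt hb) r i x = Xproc b (Nat.zero_lt_of_lt hb) r i y := by
  rw [Xproc, Xproc, h₁, h₂, show W' + b ^ T * R + b ^ M * c - (W + b ^ T * R + b ^ M * c) = W' - W
    by omega]
  exact deltaX_addNat_congr_of_no_carry hb hW hW' hR hx hxy

/-! ### The Haar measure on `b`-adic integers -/

section Cylinders

variable {b : ℕ}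

def IsUniformOnCylinders (P : Measure (ℕ → Fin b)) : Prop :=
  ∀ (k : ℕ) (a : ℕ → Fin b), P {x | ∀ i < k, x i = a i} = (1 / (b : ENNReal)) ^ k

def initialCylinders (b : ℕ) : Set (Set (ℕ → Fin b)) :=
  {s | ∃ (N : ℕ) (a : ℕ → Fin b), s = {x | ∀ i < N, x i = a i}}

theorem measurableSet_initialCylinder (N : ℕ) (a : ℕ → Fin b) :
    MeasurableSet {x : ℕ → Fin b | ∀ i < N, x i = a i} := by
  simp only [Set.ofPred_forall]
  exact MeasurableSet.iInter fun i => MeasurableSet.iInter fun _ =>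
    measurableSet_eq_fun (measurable_pi_apply i) measurable_const

theorem isPiSystem_initialCylinders : IsPiSystem (initialCylinders b) := by
  rintro s ⟨N, a, rfl⟩ t ⟨N', a', rfl⟩ ⟨x₀, hx₀, hx₀'⟩
  refine ⟨max N N', x₀, Set.ext fun x => ⟨fun ⟨hx, hx'⟩ i hi => ?_, fun hx => ⟨?_, ?_⟩⟩⟩
  · rcases lt_or_ge i N with h | h
    · rw [hx i h, hx₀ i h]
    · rw [hx' i (by omega), hx₀' i (by omega)]
  · exact fun i hi => (hx i (by omega)).trans (hx₀ i hi)
  · exact fun i hi => (hx i (by omega)).trans (hx₀' i hi)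

theorem generateFrom_initialCylinders [NeZero b] :
    MeasurableSpace.generateFrom (initialCylinders b) = MeasurableSpace.pi := by
  refine le_antisymm (MeasurableSpace.generateFrom_le ?_) ?_
  · rintro s ⟨N, a, rfl⟩
    exact measurableSet_initialCylinder N a
  refine iSup_le fun i => Measurable.comap_le
    (@measurable_to_countable' _ _ _ _ (MeasurableSpace.generateFrom _) _ fun v => ?_)
  have hunion : (fun x : ℕ → Fin b => x i) ⁻¹' {v} = ⋃ (c : Fin (i + 1) → Fin b)
      (_ : c (Fin.last i) = v), {x | ∀ j < i + 1, x j = Function.extend Fin.val c 0 j} := by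
    ext x
    simp only [Set.mem_preimage, Set.mem_singleton_iff, Set.mem_iUnion, Set.mem_ofPred_eq]
    constructor
    · rintro rfl
      exact ⟨fun j => x j, rfl, fun j hj =>
        (Fin.val_injective.extend_apply (fun j : Fin (i + 1) => x j) 0 ⟨j, hj⟩).symm⟩
    · rintro ⟨c, rfl, hx⟩
      exact (hx i i.lt_succ_self).trans (Fin.val_injective.extend_apply c 0 (Fin.last i))
  rw [hunion]
  exact .iUnion fun c => .iUnion fun _ => .basic _ ⟨i + 1, _, rfl⟩

end Cylinders

theorem measure_inter_preimage_finset {α β : Type*} [MeasurableSpace α] [MeasurableSpace β]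
    [MeasurableSingletonClass β] (μ : Measure α) {f : α → β} (hf : Measurable f) (A : Set α)
    (S : Finset β) : μ (A ∩ f ⁻¹' S) = ∑ c ∈ S, μ (A ∩ f ⁻¹' {c}) := by
  classical
  induction S using Finset.induction_on with
  | empty => simp
  | insert c S hc ih =>
    rw [Finset.sum_insert hc, ← ih,
      ← measure_inter_add_sdiff (A ∩ f ⁻¹' ↑(insert c S)) (hf (measurableSet_singleton c))]
    congr 2 <;> ext x <;> by_cases hx : f x = c <;> simp [hx, hc]

def lowDigits {b : ℕ} (M : ℕ) (x : ℕ → Fin b) : Fin M → Fin b := fun i => x i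

theorem measurable_lowDigits {b : ℕ} (M : ℕ) : Measurable (lowDigits (b := b) M) :=
  measurable_pi_lambda _ fun i => measurable_pi_apply (i : ℕ)

theorem truncVal_eq_finFunctionFinEquiv {b : ℕ} (M : ℕ) (x : ℕ → Fin b) :
    truncVal b M x = finFunctionFinEquiv (lowDigits M x) := by
  rw [finFunctionFinEquiv_apply, truncVal, Finset.sum_range]
  rfl

namespace IsUniformOnCylinders

variable {b : ℕ} [NeZero b] {P : Measure (ℕ → Fin b)} (hP : IsUniformOnCylinders P)
include hP

theorem isProbabilityMeasure : IsProbabilityMeasure P :=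
  ⟨by simpa using hP 0 0⟩

theorem map_add_right (e : ℕ → Fin b) : P.map (· + e) = P := by
  have := hP.isProbabilityMeasure
  refine ext_of_generate_finite _ generateFrom_initialCylinders.symm isPiSystem_initialCylinders
    (fun s ⟨N, a, hs⟩ => ?_) (by simp [Measure.map_apply (measurable_add_const e)])
  have hpre : (· + e) ⁻¹' s = {x | ∀ i < N, x i = (a - e) i} := by
    ext x
    simp [hs, eq_sub_iff_add_eq]
  rw [Measure.map_apply (measurable_add_const e) (hs ▸ measurableSet_initialCylinder N a), hpre,
    hs, hP, hP]

theorem measure_preimage_add_right (e : ℕ → Fin b) (s : Set (ℕ → Fin b)) :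
    P ((· + e) ⁻¹' s) = P s :=
  have : P.IsAddRightInvariant := ⟨hP.map_add_right⟩
  MeasureTheory.measure_preimage_add_right P e s

theorem measure_inter_lowDigits_singleton {M : ℕ} {A : Set (ℕ → Fin b)}
    (hA : DependsOn (· ∈ A) (Set.Ici M)) (c : Fin M → Fin b) :
    P (A ∩ lowDigits M ⁻¹' {c}) = P (A ∩ lowDigits M ⁻¹' {0}) := by
  rw [← hP.measure_preimage_add_right (Function.extend Fin.val c 0)]
  congr 1
  ext x
  have hhigh : x + Function.extend Fin.val c 0 ∈ A ↔ x ∈ A := by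
    refine iff_of_eq (hA fun i (hi : M ≤ i) => ?_)
    rw [Pi.add_apply, Function.extend_apply' _ _ _ fun ⟨j, hj⟩ => by omega, Pi.zero_apply, add_zero]
  have hlow : lowDigits M (x + Function.extend Fin.val c 0) = c ↔ lowDigits M x = 0 := by
    simp only [funext_iff, lowDigits, Pi.add_apply, Fin.val_injective.extend_apply, Pi.zero_apply,
      add_eq_right]
  simp [hhigh, hlow]

theorem measure_inter_lowDigits_preimage {M : ℕ} {A : Set (ℕ → Fin b)}
    (hA : DependsOn (· ∈ A) (Set.Ici M)) (S : Finset (Fin M → Fin b)) :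
    P (A ∩ lowDigits M ⁻¹' S) = S.card * P (A ∩ lowDigits M ⁻¹' {0}) := by
  rw [measure_inter_preimage_finset P (measurable_lowDigits M),
    Finset.sum_congr rfl fun c _ => hP.measure_inter_lowDigits_singleton hA c, Finset.sum_const,
    nsmul_eq_mul]

theorem measure_lowDigits_preimage_zero (M : ℕ) :
    P (lowDigits M ⁻¹' {0}) = (1 / (b : ENNReal)) ^ M := by
  rw [← hP M 0]
  congr 1
  ext x
  simp [lowDigits, funext_iff, Fin.forall_iff]

theorem measure_inter_eq_mul_of_dependsOn {M : ℕ} {A B : Set (ℕ → Fin b)}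
    (hA : DependsOn (· ∈ A) (Set.Ici M)) (hB : DependsOn (· ∈ B) (Set.Iio M)) :
    P (A ∩ B) = P A * P B := by
  classical
  set S := Finset.univ.filter fun c : Fin M → Fin b => Function.extend Fin.val c 0 ∈ B
  have hBS : B = lowDigits M ⁻¹' S := by
    ext x
    simpa [S] using iff_of_eq (hB fun i (hi : i < M) =>
      (Fin.val_injective.extend_apply (lowDigits M x) 0 ⟨i, hi⟩).symm)
  have hAB := hP.measure_inter_lowDigits_preimage hA S
  have hAU := hP.measure_inter_lowDigits_preimage hA (Finset.univ : Finset (Fin M → Fin b))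
  have hUB := hP.measure_inter_lowDigits_preimage (A := Set.univ) (fun _ _ _ => rfl) S
  have hUU := hP.measure_inter_lowDigits_preimage (A := Set.univ) (fun _ _ _ => rfl)
    (Finset.univ : Finset (Fin M → Fin b))
  have := hP.isProbabilityMeasure
  simp only [Finset.coe_univ, Set.preimage_univ, Set.inter_univ, Set.univ_inter,
    measure_univ] at hAU hUB hUU
  rw [hBS, hAB, hAU, hUB]
  calc (S.card : ENNReal) * P (A ∩ lowDigits M ⁻¹' {0})
      = S.card * P (A ∩ lowDigits M ⁻¹' {0}) * 1 := (mul_one _).symm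
    _ = _ := by rw [hUU]; ring

theorem measure_truncVal_mem_le (M : ℕ) (I : Finset ℕ) :
    P {x | truncVal b M x ∈ I} ≤ I.card * (1 / (b : ENNReal)) ^ M := by
  classical
  set S := Finset.univ.filter fun c : Fin M → Fin b => (finFunctionFinEquiv c : ℕ) ∈ I
  have hS : {x | truncVal b M x ∈ I} = Set.univ ∩ lowDigits M ⁻¹' S := by
    ext x
    simp [S, truncVal_eq_finFunctionFinEquiv]
  have hcard : S.card ≤ I.card :=
    Finset.card_le_card_of_injOn (fun c => (finFunctionFinEquiv c : ℕ))
      (fun c hc => (Finset.mem_filter.1 hc).2)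
      fun c _ c' _ h => finFunctionFinEquiv.injective (Fin.val_injective h)
  rw [hS, hP.measure_inter_lowDigits_preimage (fun _ _ _ => rfl), Set.univ_inter,
    hP.measure_lowDigits_preimage_zero]
  gcongr

theorem measure_carryWindow_le (M T R : ℕ) :
    (P {x | truncVal b M x ∈ carryWindow b M T R}).toReal ≤ (b : ℝ) ^ T * (1 / b) ^ M := by
  have h := (hP.measure_truncVal_mem_le M (carryWindow b M T R)).trans
    (mul_le_mul_left (Nat.cast_le.2 (card_carryWindow_le M T R)) _)
  refine (ENNReal.toReal_mono (ENNReal.mul_ne_top (by simp)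
    (ENNReal.pow_ne_top (by simp [NeZero.ne b]))) h).trans_eq ?_
  simp

end IsUniformOnCylinders

theorem abs_measure_inter_div_sub_le_of_indep {Ω : Type*} [MeasurableSpace Ω] {μ : Measure Ω}
    [IsFiniteMeasure μ] {A B B' C : Set Ω} (hA : 0 < μ A) (hB' : μ (A ∩ B') = μ A * μ B')
    (hC : μ (A ∩ C) = μ A * μ C) (hBB' : ∀ x ∉ C, x ∈ B ↔ x ∈ B') :
    |(μ (A ∩ B)).toReal / (μ A).toReal - (μ B).toReal| ≤ 2 * (μ C).toReal := by
  have hcover {S S' : Set Ω} (h : ∀ x ∉ C, x ∈ S → x ∈ S') (D : Set Ω) :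
      μ.real (D ∩ S) ≤ μ.real (D ∩ S') + μ.real (D ∩ C) := by
    refine (measureReal_mono (s₂ := D ∩ S' ∪ D ∩ C) fun x hx => ?_).trans
      (measureReal_union_le _ _)
    obtain ⟨hD, hS⟩ := hx
    by_cases hx : x ∈ C
    · exact Or.inr ⟨hD, hx⟩
    · exact Or.inl ⟨hD, h x hx hS⟩
  have h₁ := hcover (fun x hx => (hBB' x hx).1) A
  have h₂ := hcover (fun x hx => (hBB' x hx).2) A
  have h₃ := hcover (fun x hx => (hBB' x hx).1) Set.univ
  have h₄ := hcover (fun x hx => (hBB' x hx).2) Set.univ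
  simp only [Set.univ_inter, measureReal_def, hB', hC, ENNReal.toReal_mul] at h₁ h₂ h₃ h₄
  have ha : 0 < (μ A).toReal := ENNReal.toReal_pos hA.ne' (measure_ne_top μ A)
  rw [abs_le, le_sub_iff_add_le, sub_le_iff_le_add, le_div_iff₀ ha, div_le_iff₀ ha]
  constructor <;> nlinarith

theorem mem_iff_of_measurableSet_iSup_comap {α β ι : Type*} {mβ : MeasurableSpace β}
    {I : Finset ι} {f : ι → α → β} (R : α → α → Prop)
    (hf : ∀ i ∈ I, ∀ ⦃x y⦄, R x y → f i x = f i y) {s : Set α}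
    (hs : MeasurableSet[⨆ i ∈ I, MeasurableSpace.comap (f i) mβ] s) {x y : α} (hxy : R x y) :
    x ∈ s ↔ y ∈ s := by
  let invariantSets : MeasurableSpace α :=
    { MeasurableSet' := fun s => ∀ ⦃x y⦄, R x y → (x ∈ s ↔ y ∈ s)
      measurableSet_empty := fun _ _ _ => Iff.rfl
      measurableSet_compl := fun _ hs _ _ hxy => not_congr (hs hxy)
      measurableSet_iUnion := fun _ hs _ _ hxy => by
        simp only [Set.mem_iUnion]
        exact exists_congr fun i => hs i hxy }
  have hle : (⨆ i ∈ I, MeasurableSpace.comap (f i) mβ) ≤ invariantSets := by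
    refine iSup₂_le fun i hi => ?_
    rintro _ ⟨t, -, rfl⟩ x y hxy
    simp only [Set.mem_preimage, hf i hi hxy]
  exact hle s hs hxy

theorem IsUniformOnCylinders.abs_measure_inter_div_sub_le {b : ℕ} [NeZero b]
    {P : Measure (ℕ → Fin b)} (hP : IsUniformOnCylinders P) {M : ℕ} {A B C : Set (ℕ → Fin b)}
    (hA : DependsOn (· ∈ A) (Set.Ici M)) (hPA : 0 < P A) (hC : DependsOn (· ∈ C) (Set.Iio M))
    (hB : ∀ x ∉ C, ∀ y, (∀ j < M, x j = y j) → (x ∈ B ↔ y ∈ B)) :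
    |(P (A ∩ B)).toReal / (P A).toReal - (P B).toReal| ≤ 2 * (P C).toReal := by
  have := hP.isProbabilityMeasure
  have hlow (x : ℕ → Fin b) : ∀ j < M, x j = Function.extend Fin.val (lowDigits M x) 0 j :=
    fun j hj => (Fin.val_injective.extend_apply (lowDigits M x) 0 ⟨j, hj⟩).symm
  have hB' : DependsOn (· ∈ {x | Function.extend Fin.val (lowDigits M x) 0 ∈ B}) (Set.Iio M) :=
    fun x y hxy => by
      simp only [Set.mem_ofPred_eq, show lowDigits M x = lowDigits M y from
        funext fun i => hxy i i.isLt]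
  exact abs_measure_inter_div_sub_le_of_indep hPA (hP.measure_inter_eq_mul_of_dependsOn hA hB')
    (hP.measure_inter_eq_mul_of_dependsOn hA hC) fun x hx => hB x hx _ (hlow x)

theorem pow_mul_one_div_pow_le_rpow {x : ℝ} (hx : 2 ≤ x) {T M k : ℕ} (hk : 1 ≤ k)
    (hTM : T + (k - 1) ≤ M) : x ^ T * (1 / x) ^ M ≤ ((x - 1) / x) ^ ((k : ℝ) / 2 - 1) := by
  have hx0 : 0 < x := by linarith
  have hq : 0 < (x - 1) / x := div_pos (by linarith) hx0
  have hq1 : (x - 1) / x ≤ 1 := (div_le_one hx0).2 (by linarith)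
  calc x ^ T * (1 / x) ^ M = (1 / x) ^ (M - T) := by
        rw [← Nat.add_sub_cancel' (le_trans (Nat.le_add_right T _) hTM), pow_add,
          Nat.add_sub_cancel_left, ← mul_assoc, ← mul_pow, mul_one_div_cancel hx0.ne', one_pow,
          one_mul]
    _ ≤ (1 / x) ^ (k - 1) := pow_le_pow_of_le_one (by positivity)
        ((div_le_one hx0).2 (by linarith)) (by omega)
    _ ≤ ((x - 1) / x) ^ (k - 1) := by gcongr; linarith
    _ = ((x - 1) / x) ^ ((k - 1 : ℕ) : ℝ) := (Real.rpow_natCast _ _).symm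
    _ ≤ ((x - 1) / x) ^ ((k : ℝ) / 2 - 1) := by
        refine Real.rpow_le_rpow_of_exponent_ge hq hq1 ?_
        rw [Nat.cast_sub hk, Nat.cast_one]
        have : (1 : ℝ) ≤ k := by exact_mod_cast hk
        linarith

/-- **Lemma (φ-mixing).** For every `r ≥ 1` and `k ≥ 1`, the φ-mixing coefficients of the
finite process `(X_i^(r))_{1 ≤ i ≤ λ(r)}` satisfy `φ(k) ≤ 2·((b-1)/b)^(k/2-1)`: for every
`p ≥ 1`, every `A ∈ σ(X_i : 1 ≤ i ≤ p)` with `ℙ(A) > 0` and every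
`B ∈ σ(X_i : k+p ≤ i ≤ λ(r))`, one has `|ℙ(B|A) - ℙ(B)| ≤ 2·((b-1)/b)^(k/2-1)`. -/
theorem phi_mixing_bound (b : ℕ) (hb : 2 ≤ b)
    (P : Measure (ℕ → Fin b))
    (hP : ∀ (k : ℕ) (a : ℕ → Fin b),
      P {x | ∀ i < k, x i = a i} = (1 / (b : ENNReal)) ^ k)
    (r : ℕ) (k : ℕ) (hk : 1 ≤ k) (p : ℕ)
    (A B : Set (ℕ → Fin b))
    (hA : MeasurableSet[⨆ i ∈ Finset.Icc 1 p,
      MeasurableSpace.comap (Xproc b (by omega) r i) ⊤] A)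
    (hPA : 0 < P A)
    (hB : MeasurableSet[⨆ i ∈ Finset.Icc (k + p) (lambB b r),
      MeasurableSpace.comap (Xproc b (by omega) r i) ⊤] B) :
    |(P (A ∩ B)).toReal / (P A).toReal - (P B).toReal| ≤
      2 * (((b : ℝ) - 1) / b) ^ ((k : ℝ) / 2 - 1) := by
  have : NeZero b := ⟨by omega⟩
  have hP' : IsUniformOnCylinders P := hP
  have hb' : (2 : ℝ) ≤ b := by exact_mod_cast hb
  by_cases hkp : lambB b r < k + p
  · have hBconst (x y : ℕ → Fin b) : x ∈ B ↔ y ∈ B :=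
      mem_iff_of_measurableSet_iSup_comap (fun _ _ => True)
        (by simp [Finset.Icc_eq_empty_of_lt hkp]) hB trivial
    calc _ ≤ 2 * (P ∅).toReal := hP'.abs_measure_inter_div_sub_le (M := 0)
          (fun x y h => by rw [funext fun i => h i (Nat.zero_le i)]) hPA (fun _ _ _ => rfl)
          fun x _ y _ => hBconst x y
      _ ≤ _ := by
        simpa using mul_nonneg zero_le_two
          (Real.rpow_nonneg (div_nonneg (by linarith) (by linarith)) _)
  obtain ⟨T, M, R, c, hTM, hR, hhigh, hlow⟩ := exists_rPart_decomposition hb hk (not_lt.1 hkp)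
  have hAdep : DependsOn (· ∈ A) (Set.Ici M) := fun x y hxy => propext <|
    mem_iff_of_measurableSet_iSup_comap _ (fun i hi => dependsOn_Xproc hb
      (hhigh _ (by simp at hi; omega)) (hhigh _ (Finset.mem_Icc.1 hi).2)) hA hxy
  have hBdep (x) (hx : truncVal b M x ∉ carryWindow b M T R) (y) (hxy : ∀ j < M, x j = y j) :
      x ∈ B ↔ y ∈ B := by
    refine mem_iff_of_measurableSet_iSup_comap
      (fun x y => truncVal b M x ∉ carryWindow b M T R ∧ ∀ j < M, x j = y j)
      (fun i hi x y ⟨hx, hxy⟩ => ?_) hB ⟨hx, hxy⟩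
    obtain ⟨W, W', hW, hW', h₁, h₂⟩ := hlow i (Finset.mem_Icc.1 hi).1 (Finset.mem_Icc.1 hi).2
    exact Xproc_congr_of_no_carry hb hW hW' hR h₁ h₂ hx hxy
  calc _ ≤ 2 * (P {x | truncVal b M x ∈ carryWindow b M T R}).toReal :=
        hP'.abs_measure_inter_div_sub_le hAdep hPA (fun x y hxy => by
          simp only [Set.mem_ofPred_eq, dependsOn_truncVal M hxy]) hBdep
    _ ≤ 2 * ((b : ℝ) ^ T * (1 / b) ^ M) := by gcongr; exact hP'.measure_carryWindow_le M T R
    _ ≤ _ := by gcongr; exact pow_mul_one_div_pow_le_rpow hb' hk hTM
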